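/- arXiv:1706.00263 — 5 statements merged into one kernel-verified Lean document; each statement's English description precedes it below -/
import Mathlib

section
/- For every natural number n ≥ 2 and every real c, ∫_c^∞ (z − c) φ(z) H_n(z) dz = H_{n−2}(c) φ(c). -/
open MeasureTheory Real Set

/-- The standard normal density `φ(z) = (2π)^(−1/2) exp(−z²/2)`. -/
noncomputable def φ (z : ℝ) : ℝ := (Real.sqrt (2 * Real.pi))⁻¹ * Real.exp (-z ^ 2 / 2)

/-- The Hermite polynomials defined by `H n z * φ z = φ⁽ⁿ⁾ z`. -/
noncomputable def H (n : ℕ) (z : ℝ) : ℝ := iteratedDeriv n φ z / φ z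

/-! Write `m = n - 2`. Since `H n * φ = φ⁽ⁿ⁾`, integration by parts gives the antiderivative
`F z = (z - c) φ⁽ᵐ⁺¹⁾(z) - φ⁽ᵐ⁾(z)` of `(z - c) φ⁽ᵐ⁺²⁾(z)`. Every derivative of `φ` is a
polynomial times `exp (-z² / 2)`, so the integrand is integrable and `F` vanishes at `+∞`;
hence the integral is `-F c = φ⁽ᵐ⁾(c) = H m c * φ c`. -/

open Polynomial Filter Topology
open scoped ContDiff

lemma integrable_eval_mul_exp_neg_mul_sq {b : ℝ} (hb : 0 < b) (p : ℝ[X]) :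
    Integrable fun x => p.eval x * exp (-b * x ^ 2) := by
  induction p using Polynomial.induction_on' with
  | add p q hp hq => simpa only [eval_add, add_mul, Pi.add_def] using hp.add hq
  | monomial k a =>
    have h := (integrable_rpow_mul_exp_neg_mul_sq hb (s := k)
      (by linarith [k.cast_nonneg (α := ℝ)])).const_mul a
    simpa only [eval_monomial, Real.rpow_natCast, mul_assoc] using h

lemma tendsto_eval_mul_exp_neg_mul_sq_atTop {b : ℝ} (hb : 0 < b) (p : ℝ[X]) :
    Tendsto (fun x => p.eval x * exp (-b * x ^ 2)) atTop (𝓝 0) := by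
  have h_exp : Tendsto (fun x => exp (x - b * x ^ 2)) atTop (𝓝 0) := by
    refine tendsto_exp_atBot.comp (tendsto_atBot_mono' atTop ?_ tendsto_neg_atTop_atBot)
    filter_upwards [eventually_ge_atTop (2 / b)] with x hx
    have : 2 ≤ b * x := by rwa [div_le_iff₀' hb] at hx
    nlinarith
  simpa only [mul_zero, div_mul_eq_mul_div, mul_div_assoc, ← exp_sub, sub_sub_cancel_left,
    neg_mul] using (p.tendsto_div_exp_atTop.mul h_exp)

lemma φ_pos (z : ℝ) : 0 < φ z := by unfold φ; positivity

lemma H_mul_φ (k : ℕ) (z : ℝ) : H k z * φ z = iteratedDeriv k φ z :=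
  div_mul_cancel₀ _ (φ_pos z).ne'

lemma contDiff_φ : ContDiff ℝ ∞ φ := by unfold φ; fun_prop

lemma iteratedDeriv_φ_eq_eval_mul_exp (k : ℕ) (z : ℝ) :
    iteratedDeriv k φ z =
      (C (√(2 * π))⁻¹ * C ((-1) ^ k) * (hermite k).map (algebraMap ℤ ℝ)).eval z
        * exp (-(1 / 2) * z ^ 2) := by
  have hφ : φ = fun z => (√(2 * π))⁻¹ * exp (-(z ^ 2 / 2)) := by ext z; simp [φ, neg_div]
  rw [hφ, iteratedDeriv_const_mul_field, iteratedDeriv_eq_iterate,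
    deriv_gaussian_eq_hermite_mul_gaussian]
  simp only [eval_mul, eval_C, eval_map, ← aeval_def]
  ring_nf

lemma integrable_eval_mul_iteratedDeriv_φ (p : ℝ[X]) (k : ℕ) :
    Integrable fun z => p.eval z * iteratedDeriv k φ z := by
  simp_rw [iteratedDeriv_φ_eq_eval_mul_exp, ← mul_assoc, ← eval_mul]
  exact integrable_eval_mul_exp_neg_mul_sq (by norm_num) _

lemma tendsto_eval_mul_iteratedDeriv_φ_atTop (p : ℝ[X]) (k : ℕ) :
    Tendsto (fun z => p.eval z * iteratedDeriv k φ z) atTop (𝓝 0) := by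
  simp_rw [iteratedDeriv_φ_eq_eval_mul_exp, ← mul_assoc, ← eval_mul]
  exact tendsto_eval_mul_exp_neg_mul_sq_atTop (by norm_num) _

lemma hasDerivAt_sub_mul_iteratedDeriv_succ_sub_iteratedDeriv {𝕜 : Type*}
    [NontriviallyNormedField 𝕜] {f : 𝕜 → 𝕜} {m : ℕ} (hf : ContDiff 𝕜 (m + 2) f) (c z : 𝕜) :
    HasDerivAt (fun z => (z - c) * iteratedDeriv (m + 1) f z - iteratedDeriv m f z)
      ((z - c) * iteratedDeriv (m + 2) f z) z := by
  have hd (k : ℕ) (hk : k ≤ m + 1) :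
      HasDerivAt (iteratedDeriv k f) (iteratedDeriv (k + 1) f z) z := by
    rw [iteratedDeriv_succ]
    refine ((hf.of_le ?_).differentiable_iteratedDeriv' k z).hasDerivAt
    exact_mod_cast (by omega : k + 1 ≤ m + 2)
  refine ((((hasDerivAt_id z).sub_const c).mul (hd (m + 1) le_rfl)).sub
    (hd m (by omega))).congr_deriv ?_
  simp only [id, one_mul]
  ring

/-- For `n ≥ 2` and `c ∈ ℝ`: `∫_c^∞ (z − c) φ(z) Hₙ(z) dz = H_{n−2}(c) φ(c)`. -/
theorem integral_sub_mul_hermite_Ioi (n : ℕ) (hn : 2 ≤ n) (c : ℝ) :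
    (∫ z in Set.Ioi c, (z - c) * φ z * H n z) = H (n - 2) c * φ c := by
  obtain ⟨m, rfl⟩ := Nat.exists_eq_add_of_le' hn
  have hderiv := hasDerivAt_sub_mul_iteratedDeriv_succ_sub_iteratedDeriv
    (by exact_mod_cast contDiff_infty.1 contDiff_φ (m + 2)) c
  have hint : IntegrableOn (fun z => (z - c) * iteratedDeriv (m + 2) φ z) (Ioi c) := by
    have h := integrable_eval_mul_iteratedDeriv_φ (X - C c) (m + 2)
    simp only [eval_sub, eval_X, eval_C] at h
    exact h.integrableOn
  have hlim : Tendsto (fun z => (z - c) * iteratedDeriv (m + 1) φ z - iteratedDeriv m φ z)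
      atTop (𝓝 0) := by
    have h := (tendsto_eval_mul_iteratedDeriv_φ_atTop (X - C c) (m + 1)).sub
      (tendsto_eval_mul_iteratedDeriv_φ_atTop 1 m)
    simpa only [eval_sub, eval_X, eval_C, eval_one, one_mul, sub_zero] using h
  simp_rw [Nat.add_sub_cancel, H_mul_φ, mul_assoc, mul_comm (φ _), H_mul_φ]
  rw [integral_Ioi_of_hasDerivAt_of_tendsto' (fun z _ => hderiv z) hint hlim]
  simp
end

section
/- (At-the-money Gram–Charlier price.) For all reals ν, B, μ3, μ4, ν·B·∫_0^∞ z·g₁(z) dz = (1/√(2π))·ν·B·(1 − (μ4 − 3)/24); in particular the at-the-money Gram–Charlier price depends on the kurtosis parameter μ4 but not on the skewness parameter μ3. -/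
open MeasureTheory Real Set

/-- The fourth-order Gram–Charlier density with skewness `μ3` and kurtosis `μ4`. -/
noncomputable def g₁ (μ3 μ4 z : ℝ) : ℝ :=
  φ z * (1 - μ3 / 6 * H 3 z + (μ4 - 3) / 24 * H 4 z)

/-! For every polynomial `p`, `(p φ)' = (p' - X p) φ` and `p φ` vanishes at `+∞`, so
`∫_a^∞ (p' - X p) φ = -p(a) φ(a)`. The integrand `z g₁(z)` is of this form with
`p = -1 - (μ3/6) z³ + ((μ4 - 3)/24) (1 + 2z² - z⁴)`, hence the integral is `-p(0) φ(0)`;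
the skewness part of `p` is odd, so it does not contribute. -/

open Polynomial Filter Topology

lemma H_eq_aeval_hermite (n : ℕ) (z : ℝ) : H n z = (-1) ^ n * aeval z (hermite n) := by
  have hφ : φ = fun z => (√(2 * π))⁻¹ * rexp (-(z ^ 2 / 2)) := by
    funext z
    rw [φ, neg_div]
  simp only [H, hφ, iteratedDeriv_const_mul_field, iteratedDeriv_eq_iterate,
    deriv_gaussian_eq_hermite_mul_gaussian]
  field_simp

lemma H_three (z : ℝ) : H 3 z = 3 * z - z ^ 3 := by
  simp only [H_eq_aeval_hermite, hermite_succ, hermite_zero, mul_one, derivative_one, sub_zero,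
    derivative_X, derivative_sub, derivative_mul, one_mul, aeval_sub, map_mul, aeval_X, map_one,
    map_add]
  ring

lemma H_four (z : ℝ) : H 4 z = z ^ 4 - 6 * z ^ 2 + 3 := by
  simp only [H_eq_aeval_hermite, hermite_succ, hermite_zero, mul_one, derivative_one, sub_zero,
    derivative_X, derivative_sub, derivative_mul, one_mul, aeval_sub, map_mul, aeval_X, map_one,
    map_add]
  ring

lemma hasDerivAt_φ (z : ℝ) : HasDerivAt φ (-z * φ z) z := by
  have h : HasDerivAt (fun z : ℝ => -z ^ 2 / 2) (-z) z := by
    simpa [neg_div] using ((hasDerivAt_pow 2 z).neg).div_const 2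
  exact (h.exp.const_mul _).congr_deriv (by rw [φ]; ring)

lemma integrable_pow_mul_φ (n : ℕ) : Integrable fun z => z ^ n * φ z := by
  have h := (integrable_rpow_mul_exp_neg_mul_sq (b := 1 / 2) (by norm_num)
    (s := n) (neg_one_lt_zero.trans_le n.cast_nonneg)).const_mul (√(2 * π))⁻¹
  refine h.congr (Eventually.of_forall fun z => ?_)
  simp only [φ, Real.rpow_natCast]
  ring_nf

lemma tendsto_pow_mul_φ_atTop (n : ℕ) : Tendsto (fun z => z ^ n * φ z) atTop (𝓝 0) := by
  have hexp : Tendsto (fun z : ℝ => rexp (-(1 / 2) * z)) atTop (𝓝 0) :=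
    tendsto_exp_atBot.comp (tendsto_id.const_mul_atTop_of_neg (by norm_num))
  have h := ((rpow_mul_exp_neg_mul_sq_isLittleO_exp_neg (b := 1 / 2) (by norm_num) n).trans_tendsto
    hexp).const_mul (√(2 * π))⁻¹
  rw [mul_zero] at h
  refine h.congr fun z => ?_
  simp only [φ, Real.rpow_natCast]
  ring_nf

lemma integrable_eval_mul_φ (p : ℝ[X]) : Integrable fun z => p.eval z * φ z := by
  induction p using Polynomial.induction_on' with
  | add p q hp hq => simp only [eval_add, add_mul]; exact hp.add hq
  | monomial n a => simpa [mul_assoc] using (integrable_pow_mul_φ n).const_mul a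

lemma tendsto_eval_mul_φ_atTop (p : ℝ[X]) :
    Tendsto (fun z => p.eval z * φ z) atTop (𝓝 0) := by
  induction p using Polynomial.induction_on' with
  | add p q hp hq => simpa [add_mul] using hp.add hq
  | monomial n a => simpa [mul_assoc] using (tendsto_pow_mul_φ_atTop n).const_mul a

lemma hasDerivAt_eval_mul_φ (p : ℝ[X]) (z : ℝ) :
    HasDerivAt (fun z => p.eval z * φ z) ((derivative p - X * p).eval z * φ z) z := by
  refine ((p.hasDerivAt z).mul (hasDerivAt_φ z)).congr_deriv ?_
  simp only [eval_sub, eval_mul, eval_X]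
  ring

theorem integral_Ioi_eval_derivative_sub_X_mul_mul_φ (p : ℝ[X]) (a : ℝ) :
    ∫ z in Ioi a, (derivative p - X * p).eval z * φ z = -(p.eval a * φ a) := by
  rw [integral_Ioi_of_hasDerivAt_of_tendsto' (fun z _ => hasDerivAt_eval_mul_φ p z)
    (integrable_eval_mul_φ _).integrableOn (tendsto_eval_mul_φ_atTop p), zero_sub]

/-- At-the-money Gram–Charlier price: it depends on the kurtosis parameter `μ4`
but not on the skewness parameter `μ3`. -/
theorem gram_charlier_atm_price (ν B μ3 μ4 : ℝ) :
    ν * B * (∫ z in Set.Ioi (0 : ℝ), z * g₁ μ3 μ4 z) =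
      1 / Real.sqrt (2 * Real.pi) * ν * B * (1 - (μ4 - 3) / 24) := by
  set p : ℝ[X] := C (-1) - C (μ3 / 6) * X ^ 3 + C ((μ4 - 3) / 24) * (-X ^ 4 + 2 * X ^ 2 + 1)
  have hp : ∀ z, z * g₁ μ3 μ4 z = (derivative p - X * p).eval z * φ z := by
    intro z
    simp only [p, g₁, H_three, H_four, derivative_add, derivative_sub, derivative_mul,
      derivative_neg, derivative_C, derivative_X_pow, derivative_one, derivative_ofNat, eval_add,
      eval_sub, eval_mul, eval_neg, eval_C, eval_pow, eval_X, eval_one, eval_ofNat, eval_zero]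
    ring
  have hφ₀ : φ 0 = (√(2 * π))⁻¹ := by simp [φ]
  simp_rw [hp, integral_Ioi_eval_derivative_sub_X_mul_mul_φ]
  simp only [p, eval_add, eval_sub, eval_mul, eval_neg, eval_C, eval_pow, eval_X, eval_one, hφ₀]
  ring
end

section
/- (Closed-form solution of the Heston Riccati equation.) Let a, ε, λ, z, B₀ ∈ ℝ with ε ≠ 0 and a² > λ²ε²z², and set d = √(a² − λ²ε²z²), p = a + d − ε²B₀, q = a − d − ε²B₀, h₄(u) = q − p·e^{d·u}, and B(u) = B₀ + (1/ε²)·p·(1 − e^{d·u})·q / h₄(u). Then B(0) = B₀, and for every u in an interval containing 0 on which h₄ does not vanish, B is differentiable at u with B'(u) = (1/2)ε²·B(u)² − a·B(u) + (1/2)λ²z². -/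
/-!
Write `k = ε²` and `γ = λ²z²/2`. Differentiating the closed form gives `p q d (p - q) e^{du} / (k h₄(u)²)`. Since `p - q = 2d`,
`p` and `q` are `k` times the distances from `B₀` to the two roots `(a ± d)/k` of
`k B²/2 - a B + γ`, and eliminating `γ` through `d² = a² - 2kγ` turns the Riccati equation into a
polynomial identity.
-/

open Real

noncomputable def riccatiClosedForm (k d p q B₀ u : ℝ) : ℝ :=
  B₀ + 1 / k * p * (1 - exp (d * u)) * q / (q - p * exp (d * u))

lemma hasDerivAt_riccatiClosedForm_eq_div (k d p q B₀ u : ℝ) (hu : q - p * exp (d * u) ≠ 0) :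
    HasDerivAt (riccatiClosedForm k d p q B₀)
      (p * q * d * (p - q) * exp (d * u) / (k * (q - p * exp (d * u)) ^ 2)) u := by
  have hexp : HasDerivAt (fun u => exp (d * u)) (exp (d * u) * d) u :=
    ((hasDerivAt_id u).const_mul d).exp.congr_deriv (by simp)
  have hnum := ((hexp.const_sub 1).const_mul (1 / k * p)).mul_const q
  have hden := (hexp.const_mul p).const_sub q
  refine ((hnum.div hden hu).const_add B₀).congr_deriv ?_
  field_simp
  ring

lemma riccati_closedForm_deriv_eq {k a γ d B₀ p q : ℝ} (hk : k ≠ 0)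
    (hd : d ^ 2 = a ^ 2 - 2 * k * γ) (hp : p = a + d - k * B₀) (hq : q = a - d - k * B₀)
    {u : ℝ} (hu : q - p * exp (d * u) ≠ 0) :
    p * q * d * (p - q) * exp (d * u) / (k * (q - p * exp (d * u)) ^ 2) =
      1 / 2 * k * riccatiClosedForm k d p q B₀ u ^ 2 - a * riccatiClosedForm k d p q B₀ u + γ := by
  have hγ : γ = (a ^ 2 - d ^ 2) / (2 * k) := by field_simp; linarith
  subst hγ hp hq
  unfold riccatiClosedForm
  field_simp
  ring

theorem hasDerivAt_riccatiClosedForm {k a γ d B₀ p q : ℝ} (hk : k ≠ 0)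
    (hd : d ^ 2 = a ^ 2 - 2 * k * γ) (hp : p = a + d - k * B₀) (hq : q = a - d - k * B₀)
    {u : ℝ} (hu : q - p * exp (d * u) ≠ 0) :
    HasDerivAt (riccatiClosedForm k d p q B₀)
      (1 / 2 * k * riccatiClosedForm k d p q B₀ u ^ 2 - a * riccatiClosedForm k d p q B₀ u + γ) u :=
  (hasDerivAt_riccatiClosedForm_eq_div k d p q B₀ u hu).congr_deriv
    (riccati_closedForm_deriv_eq hk hd hp hq hu)

/-- Closed-form solution of the Heston Riccati equation
`B' = (1/2)ε²B² − aB + (1/2)λ²z²` (with `a = κξ − ερλz`): the explicit function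
`B(u) = B₀ + ε⁻² p (1 − e^{du}) q / h₄(u)` satisfies `B(0) = B₀` and the ODE at every
point where `h₄` does not vanish. -/
theorem heston_riccati_solution (a ε lam z B₀ : ℝ) (hε : ε ≠ 0)
    (hdisc : lam ^ 2 * ε ^ 2 * z ^ 2 < a ^ 2)
    (d p q : ℝ)
    (hd : d = Real.sqrt (a ^ 2 - lam ^ 2 * ε ^ 2 * z ^ 2))
    (hp : p = a + d - ε ^ 2 * B₀)
    (hq : q = a - d - ε ^ 2 * B₀)
    (h₄ B : ℝ → ℝ)
    (hh₄ : ∀ u, h₄ u = q - p * Real.exp (d * u))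
    (hB : ∀ u, B u = B₀ + (1 / ε ^ 2) * p * (1 - Real.exp (d * u)) * q / h₄ u) :
    B 0 = B₀ ∧
    ∀ u : ℝ, h₄ u ≠ 0 →
      HasDerivAt B (1 / 2 * ε ^ 2 * (B u) ^ 2 - a * B u + 1 / 2 * lam ^ 2 * z ^ 2) u := by
  have hd2 : d ^ 2 = a ^ 2 - 2 * ε ^ 2 * (1 / 2 * lam ^ 2 * z ^ 2) := by
    rw [hd, sq_sqrt (by linarith)]
    ring
  have hBfun : B = riccatiClosedForm (ε ^ 2) d p q B₀ :=
    funext fun u => by rw [hB, hh₄, riccatiClosedForm]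
  refine ⟨by simp [hB], fun u hu => ?_⟩
  rw [hh₄] at hu
  rw [hBfun]
  exact hasDerivAt_riccatiClosedForm (pow_ne_zero 2 hε) hd2 hp hq hu
end

section
/- (Closed-form solution of the accompanying linear equation.) Let a, ε, λ, z, B₀, κ, θ ∈ ℝ with ε ≠ 0 and a² > λ²ε²z², and set d = √(a² − λ²ε²z²), p = a + d − ε²B₀, q = a − d − ε²B₀, h₄(u) = q − p·e^{d·u}, B(u) = B₀ + (1/ε²)·p·(1 − e^{d·u})·q / h₄(u), and Ã(u) = (κθ/ε²)·( (a + d)·u − 2·log( −h₄(u)/(2d) ) ). Then Ã(0) = 0, and for every u in an interval containing 0 on which −h₄(u)/(2d) > 0, Ã is differentiable at u with Ã'(u) = κθ·B(u). -/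
open Real

/- Since `h₄' = -d p e^{du}`, differentiating gives
`(ε²/κθ) Ã' = a + d + 2 d p e^{du} / h₄ = ε² B₀ + p + 2 d p e^{du} / h₄`,
and `p + 2 d p e^{du} / h₄ = p q (1 - e^{du}) / h₄` because `p - q = 2d`; this is `ε² (B - B₀)`.
At `u = 0`, `h₄ 0 = q - p = -2d`, so the logarithm vanishes. -/

theorem hasDerivAt_log_div_const {f : ℝ → ℝ} {f' x : ℝ} (k : ℝ) (hf : HasDerivAt f f' x)
    (hx : f x / k ≠ 0) : HasDerivAt (fun y => log (f y / k)) (f' / f x) x := by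
  have hk : k ≠ 0 := by rintro rfl; simp at hx
  convert (hf.div_const k).log hx using 1
  field_simp

theorem hasDerivAt_mul_exp_mul_sub (p q d u : ℝ) :
    HasDerivAt (fun v => p * exp (d * v) - q) (p * d * exp (d * u)) u := by
  refine ((((hasDerivAt_id' u).const_mul d).exp.const_mul p).sub_const q).congr_deriv ?_
  ring

theorem add_two_mul_div_sub_mul_eq {p q d e : ℝ} (hpq : p - q = 2 * d) (he : q - p * e ≠ 0) :
    p + 2 * (p * d * e / (q - p * e)) = p * (1 - e) * q / (q - p * e) := by
  field_simp
  linear_combination (-p * e) * hpq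

theorem heston_linear_solution_general (a ε B₀ κ θ : ℝ) (hε : ε ≠ 0)
    (d p q : ℝ)
    (hp : p = a + d - ε ^ 2 * B₀)
    (hq : q = a - d - ε ^ 2 * B₀)
    (h₄ B Atilde : ℝ → ℝ)
    (hh₄ : ∀ u, h₄ u = q - p * Real.exp (d * u))
    (hB : ∀ u, B u = B₀ + (1 / ε ^ 2) * p * (1 - Real.exp (d * u)) * q / h₄ u)
    (hAtilde : ∀ u, Atilde u = κ * θ / ε ^ 2 * ((a + d) * u - 2 * Real.log (-h₄ u / (2 * d)))) :
    Atilde 0 = 0 ∧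
    ∀ u : ℝ, 0 < -h₄ u / (2 * d) → HasDerivAt Atilde (κ * θ * B u) u := by
  have hpq : p - q = 2 * d := by rw [hp, hq]; ring
  refine ⟨?_, fun u hu => ?_⟩
  · have h₄_zero : -h₄ 0 = 2 * d := by rw [hh₄, mul_zero, exp_zero]; linear_combination hpq
    simp [hAtilde, h₄_zero]
  · have hh₄' : HasDerivAt (fun v => -h₄ v) (p * d * exp (d * u)) u := by
      simpa only [hh₄, neg_sub] using hasDerivAt_mul_exp_mul_sub p q d u
    have hA : HasDerivAt Atilde
        (κ * θ / ε ^ 2 * ((a + d) * 1 - 2 * (p * d * exp (d * u) / -h₄ u))) u := by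
      rw [show Atilde = _ from funext hAtilde]
      exact (((hasDerivAt_id' u).const_mul (a + d)).sub
        ((hasDerivAt_log_div_const (2 * d) hh₄' hu.ne').const_mul 2)).const_mul _
    have hh₄u : q - p * exp (d * u) ≠ 0 := by rintro h; simp [hh₄, h] at hu
    have ha : a + d = ε ^ 2 * B₀ + p := by rw [hp]; ring
    refine hA.congr_deriv ?_
    rw [hB, hh₄]
    calc κ * θ / ε ^ 2 * ((a + d) * 1 - 2 * (p * d * exp (d * u) / -(q - p * exp (d * u))))
        = κ * θ / ε ^ 2 *
            (ε ^ 2 * B₀ + (p + 2 * (p * d * exp (d * u) / (q - p * exp (d * u))))) := by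
          rw [ha, div_neg]; ring
      _ = κ * θ * (B₀ + 1 / ε ^ 2 * p * (1 - exp (d * u)) * q / (q - p * exp (d * u))) := by
          rw [add_two_mul_div_sub_mul_eq hpq hh₄u]; field_simp

/-- Closed-form solution of the accompanying linear equation `Atilde' = κθB`: with the
explicit Riccati solution `B`, the function
`Atilde(u) = (κθ/ε²)((a + d)u − 2 log(−h₄(u)/(2d)))` satisfies `Atilde(0) = 0` and `Atilde' = κθB`
at every point where `−h₄(u)/(2d) > 0`. -/
theorem heston_linear_solution (a ε lam z B₀ κ θ : ℝ) (hε : ε ≠ 0)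
    (hdisc : lam ^ 2 * ε ^ 2 * z ^ 2 < a ^ 2)
    (d p q : ℝ)
    (hd : d = Real.sqrt (a ^ 2 - lam ^ 2 * ε ^ 2 * z ^ 2))
    (hp : p = a + d - ε ^ 2 * B₀)
    (hq : q = a - d - ε ^ 2 * B₀)
    (h₄ B Atilde : ℝ → ℝ)
    (hh₄ : ∀ u, h₄ u = q - p * Real.exp (d * u))
    (hB : ∀ u, B u = B₀ + (1 / ε ^ 2) * p * (1 - Real.exp (d * u)) * q / h₄ u)
    (hAtilde : ∀ u, Atilde u = κ * θ / ε ^ 2 * ((a + d) * u - 2 * Real.log (-h₄ u / (2 * d)))) :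
    Atilde 0 = 0 ∧
    ∀ u : ℝ, 0 < -h₄ u / (2 * d) → HasDerivAt Atilde (κ * θ * B u) u :=
  heston_linear_solution_general a ε B₀ κ θ hε d p q hp hq h₄ B Atilde hh₄ hB hAtilde
end

section
/- (Verification of the Kolmogorov backward equation by the separable ansatz.) Let κ, θ, ξ, ε, ρ, λ, z, T ∈ ℝ and let A, B : ℝ → ℝ be differentiable with A(0) = 0, B(0) = 0, A'(τ) = κθ·B(τ) and B'(τ) = (1/2)ε²·B(τ)² + (ερλz − κξ)·B(τ) + (1/2)λ²z² for all τ. Define u(t, V, x) = exp( A(T − t) + B(T − t)·V + z·x ). Then u(T, V, x) = e^{z·x} for all V, x, and for all (t, V, x) the partial derivatives of u satisfy ∂u/∂t + (κθ − κξ·V)·∂u/∂V + (1/2)ε²·V·∂²u/∂V² + ερλ·V·∂²u/∂V∂x + (1/2)λ²·V·∂²u/∂x² = 0. -/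
/-!
Write `u = exp φ` with `φ(t, V, x) = A(T − t) + B(T − t)V + zx`. Since `φ` is affine in `(V, x)`,
every derivative of `u` is `u` times a polynomial in `B(T − t)`, `z` and `−A'`, `−B'`, so the
backward operator applied to `u` equals `u` times
`−A' − B'V + (κθ − κξV)B + (1/2)ε²VB² + ερλzVB + (1/2)λ²z²V`,
which vanishes identically by the two ODEs for `A` and `B`.
-/

open Real

lemma hasDerivAt_exp_add_mul_add (a b c w : ℝ) :
    HasDerivAt (fun w => exp (a + b * w + c)) (exp (a + b * w + c) * b) w := by
  simpa using ((((hasDerivAt_id w).const_mul b).const_add a).add_const c).exp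

lemma deriv_exp_add_mul_add (a b c : ℝ) :
    deriv (fun w => exp (a + b * w + c)) = fun w => exp (a + b * w + c) * b :=
  funext fun w => (hasDerivAt_exp_add_mul_add a b c w).deriv

lemma deriv_exp_add_mul (c k : ℝ) :
    deriv (fun y => exp (c + k * y)) = fun y => exp (c + k * y) * k := by
  simpa using deriv_exp_add_mul_add c k 0

lemma hasDerivAt_exp_comp_const_sub {A B : ℝ → ℝ} {T t : ℝ}
    (hA : DifferentiableAt ℝ A (T - t)) (hB : DifferentiableAt ℝ B (T - t)) (V c : ℝ) :
    HasDerivAt (fun s => exp (A (T - s) + B (T - s) * V + c))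
      (exp (A (T - t) + B (T - t) * V + c) * -(deriv A (T - t) + deriv B (T - t) * V)) t := by
  have hφ : HasDerivAt (fun s => A (T - s) + B (T - s) * V + c)
      (-deriv A (T - t) + -deriv B (T - t) * V) t :=
    ((hA.hasDerivAt.comp_const_sub T t).add
      ((hB.hasDerivAt.comp_const_sub T t).mul_const V)).add_const c
  convert hφ.exp using 1
  ring

/-- Verification of the Kolmogorov backward equation by the separable ansatz
`u(t, V, x) = exp(A(T − t) + B(T − t)V + zx)`, where `A, B` solve the associated
ODE system with `A(0) = B(0) = 0`: terminal condition `u(T, V, x) = e^{zx}` and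
`∂u/∂t + (κθ − κξV) ∂u/∂V + (1/2)ε²V ∂²u/∂V² + ερλV ∂²u/∂V∂x + (1/2)λ²V ∂²u/∂x² = 0`. -/
theorem kolmogorov_backward_equation (κ θ ξ ε ρ lam z T : ℝ) (A B : ℝ → ℝ)
    (hA : Differentiable ℝ A) (hB : Differentiable ℝ B)
    (hA0 : A 0 = 0) (hB0 : B 0 = 0)
    (hA' : ∀ τ, deriv A τ = κ * θ * B τ)
    (hB' : ∀ τ, deriv B τ =
      1 / 2 * ε ^ 2 * (B τ) ^ 2 + (ε * ρ * lam * z - κ * ξ) * B τ + 1 / 2 * lam ^ 2 * z ^ 2)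
    (u : ℝ → ℝ → ℝ → ℝ)
    (hu : ∀ t V x, u t V x = Real.exp (A (T - t) + B (T - t) * V + z * x)) :
    (∀ V x : ℝ, u T V x = Real.exp (z * x)) ∧
    ∀ t V x : ℝ,
      deriv (fun s => u s V x) t
      + (κ * θ - κ * ξ * V) * deriv (fun w => u t w x) V
      + 1 / 2 * ε ^ 2 * V * deriv (fun w => deriv (fun w' => u t w' x) w) V
      + ε * ρ * lam * V * deriv (fun w => deriv (fun y => u t w y) x) V
      + 1 / 2 * lam ^ 2 * V * deriv (fun y => deriv (fun y' => u t V y') y) x = 0 := by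
  refine ⟨fun V x => by simp [hu, hA0, hB0], fun t V x => ?_⟩
  simp only [hu]
  rw [(hasDerivAt_exp_comp_const_sub (hA _) (hB _) V (z * x)).deriv]
  simp only [deriv_exp_add_mul_add, deriv_exp_add_mul, deriv_mul_const_field]
  rw [hA', hB']
  ring
end
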